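/- The LP relaxations of the arc-flow formulation and of the Gilmore-Gomory formulation over the same set of patterns have equal optimal values. -/

import Mathlib

/-- Paths as lists of arcs: `APath src tgt u v P` means `P` is a list of consecutive arcs
leading from `u` to `v`. -/
inductive APath {V A : Type} (src tgt : A → V) : V → V → List A → Prop
  | nil (v : V) : APath src tgt v v []
  | cons {u v : V} {e : A} {P : List A} :
      src e = u → APath src tgt (tgt e) v P → APath src tgt u v (e :: P)

/-!
A nonnegative flow in a ranked DAG with no arc into `s` and none out of `t` is a nonnegative
combination of `s`-`t` paths: every arc carrying flow lies on an `s`-`t` path of positive arcs,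
and subtracting the bottleneck value along it keeps the flow feasible while emptying one more
arc. Grouping the paths of such a decomposition by the pattern they carry turns a feasible flow
into a pattern solution with the same item coverage and the same value. Conversely, sending
`x a` units along a path carrying pattern `a` gives a feasible flow with the same coverage and
value at most `∑ x a`. Each LP thus dominates the other, so the infima agree.
-/

open Finset

theorem List.count_map_eq_countP {α β : Type*} [BEq β] [LawfulBEq β] [DecidableEq β]
    (g : α → β) (l : List α) (b : β) : (l.map g).count b = l.countP (g · = b) := by
  simp only [List.count, List.countP_map, Function.comp_def, Bool.beq_eq_decide_eq]

variable {V A : Type}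

namespace APath

variable {src tgt : A → V} {u v w : V} {l l' : List A}

theorem append (h : APath src tgt u v l) (h' : APath src tgt v w l') :
    APath src tgt u w (l ++ l') := by
  induction h with
  | nil => exact h'
  | cons he _ ih => exact cons he (ih h')

theorem reverse (h : APath tgt src u v l) : APath src tgt v u l.reverse := by
  induction h with
  | nil w => exact nil w
  | @cons u _ e _ he _ ih =>
    subst he
    rw [List.reverse_cons]
    exact ih.append (cons rfl (nil _))

theorem rank_le {r : V → ℕ} (hr : ∀ e, r (src e) < r (tgt e)) (h : APath src tgt u v l) :
    r u ≤ r v := by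
  induction h with
  | nil => rfl
  | cons he _ ih => exact he ▸ (hr _).le.trans ih

theorem rank_lt {r : V → ℕ} (hr : ∀ e, r (src e) < r (tgt e)) (h : APath src tgt u v l)
    (hl : l ≠ []) : r u < r v := by
  cases h with
  | nil => exact absurd rfl hl
  | cons he h' => exact he ▸ (hr _).trans_le (h'.rank_le hr)

theorem rank_le_of_mem {r : V → ℕ} (hr : ∀ e, r (src e) < r (tgt e))
    (h : APath src tgt u v l) : ∀ e ∈ l, r u ≤ r (src e) := by
  induction h with
  | nil => simp
  | cons he _ ih =>
    subst he
    exact List.forall_mem_cons.2 ⟨le_rfl, fun e' he' => (hr _).le.trans (ih e' he')⟩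

theorem nodup {r : V → ℕ} (hr : ∀ e, r (src e) < r (tgt e)) (h : APath src tgt u v l) :
    l.Nodup := by
  induction h with
  | nil => exact List.nodup_nil
  | @cons _ _ e _ _ h' ih =>
    exact List.nodup_cons.2 ⟨fun he => (hr e).not_ge (h'.rank_le_of_mem hr e he), ih⟩

theorem countP_tgt_add [DecidableEq V] (h : APath src tgt u v l) (w : V) :
    l.countP (tgt · = w) + (if u = w then 1 else 0) =
      l.countP (src · = w) + (if v = w then 1 else 0) := by
  induction h with
  | nil => simp
  | cons he _ ih =>
    subst he
    simp only [List.countP_cons, decide_eq_true_eq] at ih ⊢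
    omega

theorem countP_tgt_eq [DecidableEq V] (h : APath src tgt u v l) (hu : u ≠ w) (hv : v ≠ w) :
    l.countP (tgt · = w) = l.countP (src · = w) := by
  simpa [hu, hv] using h.countP_tgt_add w

theorem countP_src_source [DecidableEq V] {s t : V} (hsrc : ∀ e, tgt e ≠ s)
    (h : APath src tgt s t l) : l.countP (src · = s) + (if t = s then 1 else 0) = 1 := by
  have := h.countP_tgt_add s
  rwa [List.countP_eq_zero.2 (by simp [hsrc]), if_pos rfl, zero_add, eq_comm] at this

end APath

section Flows

variable [Fintype A]

/-- With `π = tgt` this is the inflow at a vertex, with `π = src` the outflow, and with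
`π = label` the amount of an item covered. -/
def fiberSum {β : Type*} [DecidableEq β] (π : A → β) (f : A → ℝ) (b : β) : ℝ :=
  ∑ e ∈ univ.filter (fun e => π e = b), f e

def pathFlow [DecidableEq A] (l : List A) (e : A) : ℝ := l.count e

variable {β : Type*} [DecidableEq β]

theorem fiberSum_nonneg {π : A → β} {f : A → ℝ} (hf : ∀ e, 0 ≤ f e) (b : β) :
    0 ≤ fiberSum π f b :=
  sum_nonneg fun e _ => hf e

theorem fiberSum_eq_zero_of_forall_ne {π : A → β} {b : β} (hb : ∀ e, π e ≠ b)
    (f : A → ℝ) : fiberSum π f b = 0 := by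
  simp [fiberSum, hb]

theorem fiberSum_sub_smul (π : A → β) (f g : A → ℝ) (c : ℝ) (b : β) :
    fiberSum π (f - c • g) b = fiberSum π f b - c * fiberSum π g b := by
  simp only [fiberSum, Pi.sub_apply, Pi.smul_apply, smul_eq_mul, sum_sub_distrib, mul_sum]

variable [DecidableEq A]

theorem fiberSum_pathFlow (π : A → β) (l : List A) (b : β) :
    fiberSum π (pathFlow l) b = l.countP (π · = b) := by
  rw [fiberSum, ← sum_filter_count_eq_countP, Nat.cast_sum]
  refine (sum_subset (filter_subset_filter _ (subset_univ _)) fun e he he' => ?_).symm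
  simp_all [pathFlow, List.count_eq_zero]

theorem fiberSum_sum_smul_pathFlow {ι : Type*} (K : Finset ι) (w : ι → ℝ) (γ : ι → List A)
    (π : A → β) (b : β) :
    fiberSum π (∑ k ∈ K, w k • pathFlow (γ k)) b =
      ∑ k ∈ K, w k * (γ k).countP (π · = b) := by
  simp only [← fiberSum_pathFlow, fiberSum, Finset.sum_apply, Pi.smul_apply, smul_eq_mul,
    mul_sum]
  exact sum_comm

theorem APath.fiberSum_tgt_pathFlow [DecidableEq V] {src tgt : A → V} {u v w : V}
    {l : List A} (h : APath src tgt u v l) (hu : u ≠ w) (hv : v ≠ w) :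
    fiberSum tgt (pathFlow l) w = fiberSum src (pathFlow l) w := by
  rw [fiberSum_pathFlow, fiberSum_pathFlow, h.countP_tgt_eq hu hv]

end Flows

section PathSearch

variable [Fintype A] [DecidableEq V] {src tgt : A → V} {r : V → ℕ} {f : A → ℝ}

theorem exists_pos_apath_from_tgt (hr : ∀ e, r (src e) < r (tgt e)) (hf : ∀ e, 0 ≤ f e)
    {t : V} (hout : ∀ v, v ≠ t → fiberSum tgt f v ≤ fiberSum src f v)
    (e : A) (he : 0 < f e) :
    ∃ l, APath src tgt (tgt e) t l ∧ ∀ e' ∈ l, 0 < f e' := by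
  by_cases het : tgt e = t
  · exact ⟨[], het ▸ APath.nil _, by simp⟩
  have hin : f e ≤ fiberSum tgt f (tgt e) := single_le_sum (fun e' _ => hf e') (by simp)
  obtain ⟨e', he'src, he'⟩ : ∃ e', src e' = tgt e ∧ 0 < f e' := by
    simpa using
      (sum_pos_iff_of_nonneg fun e' _ => hf e').1 (he.trans_le (hin.trans (hout _ het)))
  obtain ⟨l, hl, hpos⟩ := exists_pos_apath_from_tgt hr hf hout e' he'
  exact ⟨e' :: l, APath.cons he'src hl, List.forall_mem_cons.2 ⟨he', hpos⟩⟩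
termination_by univ.sup (fun e => r (tgt e)) - r (tgt e)
decreasing_by
  have := le_sup (f := fun e => r (tgt e)) (mem_univ e')
  have := hr e'
  rw [he'src] at this
  omega

theorem exists_pos_apath_to_src (hr : ∀ e, r (src e) < r (tgt e)) (hf : ∀ e, 0 ≤ f e)
    {s : V} (hin : ∀ v, v ≠ s → fiberSum src f v ≤ fiberSum tgt f v)
    (e : A) (he : 0 < f e) :
    ∃ l, APath src tgt s (src e) l ∧ ∀ e' ∈ l, 0 < f e' := by
  -- search forward in the reversed graph, which `N - r` ranks
  let N := univ.sup fun e => r (tgt e)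
  have hr' : ∀ e, N - r (tgt e) < N - r (src e) := fun e => by
    have := le_sup (f := fun e => r (tgt e)) (mem_univ e)
    have := hr e
    omega
  obtain ⟨l, hl, hpos⟩ :=
    exists_pos_apath_from_tgt (src := tgt) (tgt := src) (r := fun v => N - r v) hr' hf hin e he
  exact ⟨l.reverse, hl.reverse, by simpa using hpos⟩

theorem exists_pos_apath_through {s t : V} (hr : ∀ e, r (src e) < r (tgt e))
    (hsrc : ∀ e, tgt e ≠ s) (htgt : ∀ e, src e ≠ t) (hf : ∀ e, 0 ≤ f e)
    (hcons : ∀ v, v ≠ s → v ≠ t → fiberSum tgt f v = fiberSum src f v)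
    (e : A) (he : 0 < f e) :
    ∃ l, APath src tgt s t l ∧ e ∈ l ∧ ∀ e' ∈ l, 0 < f e' := by
  have hout : ∀ v, v ≠ t → fiberSum tgt f v ≤ fiberSum src f v := fun v hvt => by
    by_cases hvs : v = s
    · rw [hvs, fiberSum_eq_zero_of_forall_ne hsrc]; exact fiberSum_nonneg hf s
    · exact (hcons v hvs hvt).le
  have hin : ∀ v, v ≠ s → fiberSum src f v ≤ fiberSum tgt f v := fun v hvs => by
    by_cases hvt : v = t
    · rw [hvt, fiberSum_eq_zero_of_forall_ne htgt]; exact fiberSum_nonneg hf t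
    · exact (hcons v hvs hvt).ge
  obtain ⟨l₁, hl₁, hpos₁⟩ := exists_pos_apath_to_src hr hf hin e he
  obtain ⟨l₂, hl₂, hpos₂⟩ := exists_pos_apath_from_tgt hr hf hout e he
  refine ⟨l₁ ++ e :: l₂, hl₁.append (APath.cons rfl hl₂), by simp, ?_⟩
  simp only [List.mem_append, List.mem_cons]
  rintro e' (h | rfl | h)
  exacts [hpos₁ e' h, he, hpos₂ e' h]

end PathSearch

section Decomposition

variable [Fintype A] [DecidableEq A]

theorem exists_bottleneck {f : A → ℝ} (hf : ∀ e, 0 ≤ f e) {l : List A} (hl : l.Nodup)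
    (hne : l ≠ []) (hpos : ∀ e ∈ l, 0 < f e) :
    ∃ δ : ℝ, 0 < δ ∧ (∀ e, 0 ≤ (f - δ • pathFlow l) e) ∧
      #(univ.filter fun e => 0 < (f - δ • pathFlow l) e) < #(univ.filter fun e => 0 < f e) := by
  obtain ⟨e₀, he₀, hmin⟩ :=
    l.toFinset.exists_min_image f ((List.toFinset_nonempty_iff _).2 hne)
  rw [List.mem_toFinset] at he₀
  have hflow : ∀ e, pathFlow l e = if e ∈ l then 1 else 0 := fun e => by
    by_cases he : e ∈ l <;> simp [pathFlow, he, List.count_eq_one_of_mem hl, List.count_eq_zero]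
  refine ⟨f e₀, hpos e₀ he₀, fun e => ?_, card_lt_card ⟨fun e => ?_, fun hsub => ?_⟩⟩
  · by_cases he : e ∈ l
    · simpa [hflow, he] using hmin e (List.mem_toFinset.2 he)
    · simpa [hflow, he] using hf e
  · by_cases he : e ∈ l <;> simp [hflow, he]
    exact (hpos e₀ he₀).trans
  · simpa [hflow, he₀] using hsub (mem_filter.2 ⟨mem_univ _, hpos e₀ he₀⟩)

variable [DecidableEq V] {src tgt : A → V} {r : V → ℕ} {s t : V}

theorem exists_pathDecomposition (hr : ∀ e, r (src e) < r (tgt e)) (hsrc : ∀ e, tgt e ≠ s)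
    (htgt : ∀ e, src e ≠ t) {f : A → ℝ} (hf : ∀ e, 0 ≤ f e)
    (hcons : ∀ v, v ≠ s → v ≠ t → fiberSum tgt f v = fiberSum src f v) :
    ∃ (n : ℕ) (γ : Fin n → List A) (w : Fin n → ℝ),
      (∀ k, APath src tgt s t (γ k) ∧ γ k ≠ []) ∧ (∀ k, 0 ≤ w k) ∧
        f = ∑ k, w k • pathFlow (γ k) := by
  induction hN : #(univ.filter fun e => 0 < f e) using Nat.strong_induction_on generalizing f with
  | _ N ih =>
  by_cases hzero : ∀ e, f e ≤ 0
  · exact ⟨0, Fin.elim0, Fin.elim0, fun k => k.elim0, fun k => k.elim0,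
      funext fun e => by simpa using le_antisymm (hzero e) (hf e)⟩
  push Not at hzero
  obtain ⟨e, he⟩ := hzero
  obtain ⟨l, hl, hel, hpos⟩ := exists_pos_apath_through hr hsrc htgt hf hcons e he
  obtain ⟨δ, hδ, hg, hlt⟩ := exists_bottleneck hf (hl.nodup hr) (List.ne_nil_of_mem hel) hpos
  have hgcons : ∀ v, v ≠ s → v ≠ t →
      fiberSum tgt (f - δ • pathFlow l) v = fiberSum src (f - δ • pathFlow l) v :=
    fun v hvs hvt => by
    rw [fiberSum_sub_smul, fiberSum_sub_smul, hcons v hvs hvt,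
      hl.fiberSum_tgt_pathFlow hvs.symm hvt.symm]
  obtain ⟨n, γ, w, hγ, hw, hdec⟩ := ih _ (hN ▸ hlt) hg hgcons rfl
  refine ⟨n + 1, Fin.cons l γ, Fin.cons δ w,
    Fin.forall_fin_succ.2 ⟨⟨hl, List.ne_nil_of_mem hel⟩, hγ⟩,
    Fin.forall_fin_succ.2 ⟨hδ.le, hw⟩, ?_⟩
  rw [Fin.sum_univ_succ]
  simp [← hdec]

end Decomposition

section PatternLP

variable [Fintype A] [DecidableEq V] {src tgt : A → V} {s t : V} {m : ℕ}
  {label : A → Option (Fin m)} {J : Finset (Fin m → Bool)}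

theorem exists_pattern_of_flow {r : V → ℕ} (hr : ∀ e, r (src e) < r (tgt e))
    (hsrc : ∀ e, tgt e ≠ s) (htgt : ∀ e, src e ≠ t)
    (h1 : ∀ l, APath src tgt s t l →
      ∃ a ∈ J, ∀ i : Fin m, (l.map label).count (some i) = (if a i then 1 else 0))
    {f : A → ℝ} (hf : ∀ e, 0 ≤ f e)
    (hcons : ∀ v, v ≠ s → v ≠ t → fiberSum tgt f v = fiberSum src f v) :
    ∃ x : (Fin m → Bool) → ℝ, (∀ a, 0 ≤ x a) ∧
      (∀ i, ∑ a ∈ J, (if a i then x a else 0) = fiberSum label f (some i)) ∧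
      ∑ a ∈ J, x a = fiberSum src f s := by
  classical
  obtain ⟨n, γ, w, hγ, hw, rfl⟩ := exists_pathDecomposition hr hsrc htgt hf hcons
  choose pat hpatJ hpat using fun k => h1 (γ k) (hγ k).1
  have regroup : ∀ c : (Fin m → Bool) → ℝ,
      ∑ a ∈ J, c a * ∑ k with pat k = a, w k = ∑ k, c (pat k) * w k := fun c => by
    rw [← sum_fiberwise_of_maps_to (fun k _ => hpatJ k)]
    refine sum_congr rfl fun a _ => ?_
    rw [mul_sum]
    exact sum_congr rfl fun k hk => by rw [(mem_filter.1 hk).2]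
  have hsource : ∀ k, (γ k).countP (src · = s) = 1 := fun k => by
    have hst : t ≠ s := fun h => ((hγ k).1.rank_lt hr (hγ k).2).ne' (congrArg r h)
    simpa [hst] using (hγ k).1.countP_src_source hsrc
  refine ⟨fun a => ∑ k with pat k = a, w k, fun a => sum_nonneg fun k _ => hw k, fun i => ?_,
    ?_⟩
  · calc ∑ a ∈ J, (if a i then ∑ k with pat k = a, w k else 0)
        _ = ∑ a ∈ J, (if a i then 1 else 0) * ∑ k with pat k = a, w k := by
          simp only [boole_mul]
        _ = ∑ k, (if pat k i then 1 else 0) * w k := regroup _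
        _ = _ := by
          rw [fiberSum_sum_smul_pathFlow]
          refine sum_congr rfl fun k _ => ?_
          rw [mul_comm, ← List.count_map_eq_countP, hpat k i, Nat.cast_ite, Nat.cast_one,
            Nat.cast_zero]
  · simpa [fiberSum_sum_smul_pathFlow, hsource] using regroup fun _ => 1

theorem exists_flow_of_pattern (hsrc : ∀ e, tgt e ≠ s)
    (h2 : ∀ a ∈ J, ∃ l, APath src tgt s t l ∧
      ∀ i : Fin m, (l.map label).count (some i) = (if a i then 1 else 0))
    {x : (Fin m → Bool) → ℝ} (hx : ∀ a, 0 ≤ x a) :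
    ∃ f : A → ℝ, (∀ e, 0 ≤ f e) ∧
      (∀ v, v ≠ s → v ≠ t → fiberSum tgt f v = fiberSum src f v) ∧
      (∀ i, fiberSum label f (some i) = ∑ a ∈ J, (if a i then x a else 0)) ∧
      fiberSum src f s ≤ ∑ a ∈ J, x a := by
  classical
  choose! γ hγ hγlabel using h2
  refine ⟨∑ a ∈ J, x a • pathFlow (γ a), fun e => ?_, fun v hvs hvt => ?_, fun i => ?_,
    ?_⟩
  · simp only [Finset.sum_apply, Pi.smul_apply, smul_eq_mul]
    exact sum_nonneg fun a _ => mul_nonneg (hx a) (Nat.cast_nonneg _)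
  · simp only [fiberSum_sum_smul_pathFlow]
    exact sum_congr rfl fun a ha => by rw [(hγ a ha).countP_tgt_eq hvs.symm hvt.symm]
  · rw [fiberSum_sum_smul_pathFlow]
    refine sum_congr rfl fun a ha => ?_
    rw [← List.count_map_eq_countP, hγlabel a ha i, Nat.cast_ite, Nat.cast_one, Nat.cast_zero,
      mul_boole]
  · rw [fiberSum_sum_smul_pathFlow]
    refine sum_le_sum fun a ha => mul_le_of_le_one_right (hx a) ?_
    have := (hγ a ha).countP_src_source hsrc
    exact_mod_cast (Nat.le_add_right _ _).trans this.le

end PatternLP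

theorem arcflow_lp_eq_pattern_lp_general {V A : Type} [Fintype A] [DecidableEq V]
    (m : ℕ) (src tgt : A → V) (label : A → Option (Fin m)) (s t : V)
    (r : V → ℕ) (hr : ∀ e, r (src e) < r (tgt e))
    (hsrc : ∀ e, tgt e ≠ s) (htgt : ∀ e, src e ≠ t)
    (J : Finset (Fin m → Bool)) (b : Fin m → ℕ)
    (h1 : ∀ ls, APath src tgt s t ls →
      ∃ a ∈ J, ∀ i : Fin m, (ls.map label).count (some i) = (if a i then 1 else 0))
    (h2 : ∀ a ∈ J, ∃ ls, APath src tgt s t ls ∧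
      ∀ i : Fin m, (ls.map label).count (some i) = (if a i then 1 else 0)) :
    sInf {z : ℝ | ∃ f : A → ℝ, (∀ e, 0 ≤ f e) ∧
        (∀ v, v ≠ s → v ≠ t →
          ∑ e ∈ Finset.univ.filter (fun e => tgt e = v), f e =
          ∑ e ∈ Finset.univ.filter (fun e => src e = v), f e) ∧
        (∀ i : Fin m, (b i : ℝ) ≤ ∑ e ∈ Finset.univ.filter (fun e => label e = some i), f e) ∧
        z = ∑ e ∈ Finset.univ.filter (fun e => src e = s), f e} =
    sInf {z : ℝ | ∃ x : (Fin m → Bool) → ℝ, (∀ a, 0 ≤ x a) ∧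
        (∀ i, (b i : ℝ) ≤ ∑ a ∈ J, (if a i then x a else 0)) ∧
        z = ∑ a ∈ J, x a} := by
  apply csInf_eq_csInf_of_forall_exists_le
  · rintro z ⟨f, hf, hcons, hb, rfl⟩
    obtain ⟨x, hx, hcover, hvalue⟩ := exists_pattern_of_flow hr hsrc htgt h1 hf hcons
    exact ⟨_, ⟨x, hx, fun i => (hb i).trans_eq (hcover i).symm, rfl⟩, hvalue.le⟩
  · rintro z ⟨x, hx, hb, rfl⟩
    obtain ⟨f, hf, hcons, hcover, hvalue⟩ := exists_flow_of_pattern (t := t) hsrc h2 hx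
    exact ⟨_, ⟨f, hf, hcons, fun i => (hb i).trans_eq (hcover i).symm, rfl⟩, hvalue⟩

/-- The LP relaxations of the arc-flow formulation and of the Gilmore-Gomory pattern
formulation have equal optimal values, whenever the graph is a DAG (with source `s`, sink `t`)
whose `s`-`t` paths are in label-preserving correspondence with the pattern set `J`:
every `s`-`t` path carries the item labels of some pattern in `J` (each item at most once),
and every pattern of `J` is carried by some `s`-`t` path. -/
theorem arcflow_lp_eq_pattern_lp {V A : Type} [Fintype V] [Fintype A] [DecidableEq V]
    (m : ℕ) (src tgt : A → V) (label : A → Option (Fin m)) (s t : V)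
    (r : V → ℕ) (hr : ∀ e, r (src e) < r (tgt e))
    (hsrc : ∀ e, tgt e ≠ s) (htgt : ∀ e, src e ≠ t)
    (J : Finset (Fin m → Bool)) (b : Fin m → ℕ)
    (h1 : ∀ ls, APath src tgt s t ls →
      ∃ a ∈ J, ∀ i : Fin m, (ls.map label).count (some i) = (if a i then 1 else 0))
    (h2 : ∀ a ∈ J, ∃ ls, APath src tgt s t ls ∧
      ∀ i : Fin m, (ls.map label).count (some i) = (if a i then 1 else 0)) :
    sInf {z : ℝ | ∃ f : A → ℝ, (∀ e, 0 ≤ f e) ∧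
        (∀ v, v ≠ s → v ≠ t →
          ∑ e ∈ Finset.univ.filter (fun e => tgt e = v), f e =
          ∑ e ∈ Finset.univ.filter (fun e => src e = v), f e) ∧
        (∀ i : Fin m, (b i : ℝ) ≤ ∑ e ∈ Finset.univ.filter (fun e => label e = some i), f e) ∧
        z = ∑ e ∈ Finset.univ.filter (fun e => src e = s), f e} =
    sInf {z : ℝ | ∃ x : (Fin m → Bool) → ℝ, (∀ a, 0 ≤ x a) ∧
        (∀ i, (b i : ℝ) ≤ ∑ a ∈ J, (if a i then x a else 0)) ∧
        z = ∑ a ∈ J, x a} :=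
  arcflow_lp_eq_pattern_lp_general m src tgt label s t r hr hsrc htgt J b h1 h2
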